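/- Assume τ ≥ 0. Then for every Λ ∈ S_{n,δ}, the set Θ♭(Λ) is nonempty; consequently θ̄(Λ) is defined for every Λ ∈ S_{n,δ}. -/

import Mathlib

/-!
Write `p = (μ; ν)` (even case; the odd case swaps the roles of the two components) and let
`ν⁺` be `ν` with its largest part raised by `τ`, a natural number by the parity of
`d(d+1)/2 + d'(d'+1)/2 + n + n'`. Then `q = (ν⁺; μ)` lies in `Θ(p)`, since `ν⁺ / ν` is a
horizontal strip. If `θ̄(r) = q` for some `r = (μ''; ν'') < p`, then `q ∈ Θ(r)` gives
`μ ⊆ μ''`, so `r < p` forces `μ'' = μ`, `|ν''| = |ν|` and `ν''` lexicographically below `ν`.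
But `ν⁺ / ν''` is a horizontal strip of `τ` boxes, which must fill the `ν₁ + τ - ν''₁` columns
of the first row of `ν⁺` beyond `ν''₁`; hence `ν''₁ ≥ ν₁`, with equality only for `ν'' = ν`.
So `q ∈ Θ♭(p)`, and `θ̄(p)` is defined.
-/

namespace PanUnitary

/-- `part μ i` : the `i`-th largest element (0-indexed) of the multiset `μ`, `0` beyond.
Viewing a multiset of naturals as a partition (identified up to trailing zeros),
this is the `(i+1)`-st part. -/
def part (μ : Multiset ℕ) (i : ℕ) : ℕ := ((μ.sort (· ≤ ·)).reverse).getD i 0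

/-- Remove the zero parts: the canonical (zero-free) representative of a partition. -/
def strip (μ : Multiset ℕ) : Multiset ℕ := μ.filter (fun x => 0 < x)

/-- `transpose μ j` is the `(j+1)`-st part of the transposed (conjugate) partition. -/
def transpose (μ : Multiset ℕ) (j : ℕ) : ℕ := (μ.filter (fun x => j < x)).card

/-- `Preceq f g` : the partition whose parts are given by `f` is `⪯` the one given by `g`,
i.e. `g i - 1 ≤ f i ≤ g i` for all `i`. -/
def Preceq (f g : ℕ → ℕ) : Prop := ∀ i, g i ≤ f i + 1 ∧ f i ≤ g i

/-- An integer `δ` is admissible if it is even and nonnegative, or odd and negative. -/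
def IsAdmissible (δ : ℤ) : Prop := (Even δ ∧ 0 ≤ δ) ∨ (Odd δ ∧ δ < 0)

/-- `ε = 1` if `δ` is even, `ε = 0` if `δ` is odd. -/
def eps (δ : ℤ) : ℕ := if Even δ then 1 else 0

/-- `d (d + 1) / 2` where `d = |δ|`. -/
def halfTri (δ : ℤ) : ℕ := δ.natAbs * (δ.natAbs + 1) / 2

/-- A symbol: a pair of rows of natural numbers (the strict-decrease condition is
part of the predicate `Symbol.IsUnitary`). -/
structure Symbol where
  A : List ℕ
  B : List ℕ

def Symbol.defect (Λ : Symbol) : ℤ := (Λ.A.length : ℤ) - (Λ.B.length : ℤ)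

/-- The row `(a_1, …, a_m)` gives the partition with parts `(a_i - e)/2 - (m - i)`. -/
def upsRow (L : List ℕ) (e : ℕ) : Multiset ℕ :=
  ((L.mapIdx fun i a => (a - e) / 2 - (L.length - 1 - i) : List ℕ) : Multiset ℕ)

/-- The bipartition `Υ(Λ)` (canonical zero-free representatives). -/
def Symbol.Upsilon (Λ : Symbol) : Multiset ℕ × Multiset ℕ :=
  (strip (upsRow Λ.A (eps Λ.defect)), strip (upsRow Λ.B (1 - eps Λ.defect)))

/-- `Λ` is a unitary-type symbol of (admissible) defect `δ`. -/
def Symbol.IsUnitary (Λ : Symbol) (δ : ℤ) : Prop :=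
  Λ.A.Pairwise (· > ·) ∧ Λ.B.Pairwise (· > ·) ∧ Λ.defect = δ ∧
    (∀ a ∈ Λ.A, a % 2 = eps δ) ∧ (∀ b ∈ Λ.B, b % 2 = 1 - eps δ)

/-- The rank `2(|μ| + |ν|) + d(d+1)/2` of a unitary-type symbol. -/
def Symbol.rank (Λ : Symbol) : ℕ :=
  2 * (Λ.Upsilon.1.sum + Λ.Upsilon.2.sum) + halfTri Λ.defect

/-- Equivalence of symbols: same defect and same `Υ`. -/
def Symbol.Equiv (Λ Λ' : Symbol) : Prop :=
  Λ.defect = Λ'.defect ∧ Λ.Upsilon = Λ'.Upsilon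

/-- Membership in `S_{n,δ}`: a unitary-type symbol of admissible defect `δ` and rank `n`. -/
def InS (n : ℕ) (δ : ℤ) (Λ : Symbol) : Prop :=
  IsAdmissible δ ∧ Λ.IsUnitary δ ∧ Λ.rank = n

/-- `Σ min(x,y)` over all unordered pairs of (positions of) entries of the list. -/
def pairMinSum : List ℕ → ℕ
  | [] => 0
  | x :: xs => (xs.map (fun y => min x y)).sum + pairMinSum xs

/-- All entries of a symbol (both rows). -/
def Symbol.entries (Λ : Symbol) : List ℕ := Λ.A ++ Λ.B

/-- `ord(Λ) = Σ min(x,y) − Σ_{i=1}^{⌊N/2⌋} (N − 2i)²`. -/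
def Symbol.ord (Λ : Symbol) : ℤ :=
  (pairMinSum Λ.entries : ℤ) -
    ∑ i ∈ Finset.Icc 1 (Λ.entries.length / 2),
      ((Λ.entries.length : ℤ) - 2 * (i : ℤ)) ^ 2

/-- The shift of a unitary-type symbol. -/
def Symbol.shift (Λ : Symbol) : Symbol :=
  ⟨Λ.A.map (fun a => a + 2) ++ [eps Λ.defect],
   Λ.B.map (fun b => b + 2) ++ [1 - eps Λ.defect]⟩

/-- The defect `δ'` for the second member of the dual pair. -/
def deltaPrime (n n' : ℕ) (δ : ℤ) : ℤ :=
  if Even (n + n') then (if δ = 0 then 0 else -δ + 1) else -δ - 1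

/-- `τ = ((n' − d'(d'+1)/2) − (n − d(d+1)/2)) / 2`. -/
def tau (n n' : ℕ) (δ : ℤ) : ℚ :=
  (((n' : ℚ) - (halfTri (deltaPrime n n' δ) : ℚ)) - ((n : ℚ) - (halfTri δ : ℚ))) / 2

/-- `τ` as a natural number (equal to `τ` whenever `τ` is a nonnegative integer). -/
def tauNat (n n' : ℕ) (δ : ℤ) : ℕ :=
  ((n' + halfTri δ) - (n + halfTri (deltaPrime n n' δ))) / 2

/-- The set of (canonical, zero-free) bipartitions `(μ;ν)` with
`2(|μ|+|ν|) + d(d+1)/2 = n`; equivalently `|μ|+|ν| = (n − d(d+1)/2)/2`. -/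
def BipSet (n : ℕ) (δ : ℤ) : Set (Multiset ℕ × Multiset ℕ) :=
  {p | (∀ x ∈ p.1, 0 < x) ∧ (∀ x ∈ p.2, 0 < x) ∧ 2 * (p.1.sum + p.2.sum) + halfTri δ = n}

/-- The `⪯`-conditions (on transposes) defining the relation `Θ`, at the level of
bipartitions `p = Υ(Λ)`, `q = Υ(Λ')`. -/
def PrecCond (n n' : ℕ) (p q : Multiset ℕ × Multiset ℕ) : Prop :=
  if Even (n + n') then
    Preceq (transpose p.2) (transpose q.1) ∧ Preceq (transpose q.2) (transpose p.1)
  else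
    Preceq (transpose p.1) (transpose q.2) ∧ Preceq (transpose q.1) (transpose p.2)

/-- `Θ` at the level of bipartitions (classes of symbols). -/
def ThetaB (n n' : ℕ) (δ : ℤ) (p q : Multiset ℕ × Multiset ℕ) : Prop :=
  q ∈ BipSet n' (deltaPrime n n' δ) ∧ PrecCond n n' p q

/-- `Λ' ∈ Θ(Λ)` for symbols, where `Λ ∈ S_{n,δ}`. -/
def InTheta (n n' : ℕ) (δ : ℤ) (Λ Λ' : Symbol) : Prop :=
  InS n' (deltaPrime n n' δ) Λ' ∧ PrecCond n n' Λ.Upsilon Λ'.Upsilon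

/-- `Λ' ∈ Θ(Λ)_k`. -/
def InThetaK (n n' : ℕ) (δ : ℤ) (k : ℕ) (Λ Λ' : Symbol) : Prop :=
  InTheta n n' δ Λ Λ' ∧
    (if Even (n + n') then (Λ'.Upsilon.2.sum : ℤ) = (Λ.Upsilon.1.sum : ℤ) - (k : ℤ)
     else (Λ'.Upsilon.1.sum : ℤ) = (Λ.Upsilon.2.sum : ℤ) - (k : ℤ))

/-- Remove (one copy of) the largest part. -/
def mtail (μ : Multiset ℕ) : Multiset ℕ := μ.erase (part μ 0)

/-- `θ_k` at the level of bipartitions: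
even case: `(μ;ν) ↦ (sort(ν, τ+k); sort(μ_2, …, μ_{m_1}, μ_1 − k))`;
odd case: `(μ;ν) ↦ (sort(ν_2, …, ν_{m_2}, ν_1 − k); sort(μ, τ+k))`. -/
def thetaBip (n n' : ℕ) (δ : ℤ) (k : ℕ) (p : Multiset ℕ × Multiset ℕ) :
    Multiset ℕ × Multiset ℕ :=
  if Even (n + n') then
    (strip ((tauNat n n' δ + k) ::ₘ p.2), strip ((part p.1 0 - k) ::ₘ mtail p.1))
  else
    (strip ((part p.2 0 - k) ::ₘ mtail p.2), strip ((tauNat n n' δ + k) ::ₘ p.1))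

/-- The unitary-type symbol of defect `δ` with `Υ = p`, whose first row has `m1`
entries and second row `m2` entries (valid whenever `m1, m2` are large enough). -/
def symbolOfBip (δ : ℤ) (p : Multiset ℕ × Multiset ℕ) (m1 m2 : ℕ) : Symbol :=
  ⟨List.ofFn (fun i : Fin m1 => 2 * (part p.1 (i : ℕ) + (m1 - 1 - (i : ℕ))) + eps δ),
   List.ofFn (fun j : Fin m2 => 2 * (part p.2 (j : ℕ) + (m2 - 1 - (j : ℕ))) + (1 - eps δ))⟩

/-- A canonical representative symbol of defect `δ` with `Υ = p`. -/
def canonicalSymbol (δ : ℤ) (p : Multiset ℕ × Multiset ℕ) : Symbol :=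
  symbolOfBip δ p (max p.1.card ((p.2.card : ℤ) + δ).toNat)
    (((max p.1.card ((p.2.card : ℤ) + δ).toNat : ℤ) - δ).toNat)

/-- A symbol representing the class `θ_k(Λ)`. -/
def thetaSymbol (n n' : ℕ) (δ : ℤ) (k : ℕ) (Λ : Symbol) : Symbol :=
  canonicalSymbol (deltaPrime n n' δ) (thetaBip n n' δ k Λ.Upsilon)

/-- `K(Λ)`: `μ_1` in the even case, `ν_1` in the odd case. -/
def bigK (n n' : ℕ) (Λ : Symbol) : ℕ :=
  if Even (n + n') then part Λ.Upsilon.1 0 else part Λ.Upsilon.2 0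

/-- `ord` at the level of bipartitions (well defined on classes). -/
def ordB (δ : ℤ) (p : Multiset ℕ × Multiset ℕ) : ℤ := (canonicalSymbol δ p).ord

/-- Strict lexicographic order on partitions. -/
def PartLexLt (μ ν : Multiset ℕ) : Prop :=
  ∃ i, (∀ j < i, part μ j = part ν j) ∧ part μ i < part ν i

/-- The total order on `S_{n,δ}` (and on `S_{n',δ'}`), at the level of bipartitions;
it depends only on the parity of `n + n'`. -/
def BLt (n n' : ℕ) (p q : Multiset ℕ × Multiset ℕ) : Prop :=
  if Even (n + n') then
    p.1.sum < q.1.sum ∨ (p.1.sum = q.1.sum ∧ PartLexLt p.1 q.1) ∨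
      (p.1 = q.1 ∧ PartLexLt p.2 q.2)
  else
    p.2.sum < q.2.sum ∨ (p.2.sum = q.2.sum ∧ PartLexLt p.2 q.2) ∨
      (p.2 = q.2 ∧ PartLexLt p.1 q.1)

/-- `q ∈ Θ♭(p)` relative to a given partial function `bar` (playing the role of `θ̄`). -/
def InFlat (n n' : ℕ) (δ : ℤ)
    (bar : Multiset ℕ × Multiset ℕ → Option (Multiset ℕ × Multiset ℕ))
    (p q : Multiset ℕ × Multiset ℕ) : Prop :=
  ThetaB n n' δ p q ∧ ∀ r ∈ BipSet n δ, BLt n n' r p → bar r ≠ some q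

/-- `bar` is the partial function `θ̄` defined by recursion along the total order:
on each `p ∈ S_{n,δ}`, if `Θ♭(p) ≠ ∅` then `bar p` is defined and is the smallest
element (w.r.t. the total order) of maximal `ord` in `Θ♭(p)`. -/
def IsThetaBar (n n' : ℕ) (δ : ℤ)
    (bar : Multiset ℕ × Multiset ℕ → Option (Multiset ℕ × Multiset ℕ)) : Prop :=
  (∀ p, p ∉ BipSet n δ → bar p = none) ∧
  ∀ p ∈ BipSet n δ,
    ((∃ q, InFlat n n' δ bar p q) → ∃ q, bar p = some q) ∧
    ∀ q, bar p = some q →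
      InFlat n n' δ bar p q ∧
      (∀ r, InFlat n n' δ bar p r →
        ordB (deltaPrime n n' δ) r ≤ ordB (deltaPrime n n' δ) q) ∧
      (∀ r, InFlat n n' δ bar p r →
        ordB (deltaPrime n n' δ) r = ordB (deltaPrime n n' δ) q → r ≠ q → BLt n n' q r)

def raiseLargestPart (ν : Multiset ℕ) (t : ℕ) : Multiset ℕ :=
  strip ((part ν 0 + t) ::ₘ mtail ν)

lemma part_zero_eq_zero : part 0 0 = 0 := by simp [part]

lemma le_part_zero {μ : Multiset ℕ} {y : ℕ} (hy : y ∈ μ) : y ≤ part μ 0 := by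
  have hsorted := List.pairwise_reverse.mpr (Multiset.pairwise_sort μ (· ≤ ·))
  rw [← Multiset.mem_sort (· ≤ ·), ← List.mem_reverse] at hy
  unfold part
  cases hL : (μ.sort (· ≤ ·)).reverse with
  | nil => simp [hL] at hy
  | cons a T =>
    rw [hL] at hy hsorted
    rcases List.mem_cons.mp hy with rfl | hyT
    · simp
    · simpa using (List.pairwise_cons.mp hsorted).1 y hyT

lemma part_zero_mem {μ : Multiset ℕ} (h : μ ≠ 0) : part μ 0 ∈ μ := by
  rw [← Multiset.mem_sort (· ≤ ·), ← List.mem_reverse]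
  unfold part
  cases hL : (μ.sort (· ≤ ·)).reverse with
  | nil =>
    refine absurd ?_ h
    rw [← Multiset.sort_eq μ (· ≤ ·), List.reverse_eq_nil_iff.mp hL, Multiset.coe_nil]
  | cons a T => simp

lemma part_zero_le_iff {μ : Multiset ℕ} {j : ℕ} : part μ 0 ≤ j ↔ ∀ y ∈ μ, y ≤ j := by
  refine ⟨fun h y hy => (le_part_zero hy).trans h, fun h => ?_⟩
  rcases eq_or_ne μ 0 with rfl | hμ
  · rw [part_zero_eq_zero]
    exact Nat.zero_le j
  · exact h _ (part_zero_mem hμ)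

lemma cons_mtail {μ : Multiset ℕ} (h : μ ≠ 0) : part μ 0 ::ₘ mtail μ = μ :=
  Multiset.cons_erase (part_zero_mem h)

lemma sum_eq_part_zero_add_sum_mtail (μ : Multiset ℕ) : μ.sum = part μ 0 + (mtail μ).sum := by
  rcases eq_or_ne μ 0 with rfl | hμ
  · simp [part_zero_eq_zero, mtail]
  · conv_lhs => rw [← cons_mtail hμ]
    exact Multiset.sum_cons _ _

lemma sum_strip (μ : Multiset ℕ) : (strip μ).sum = μ.sum := by
  unfold strip
  conv_rhs => rw [← Multiset.filter_add_not (fun x => 0 < x) μ]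
  rw [Multiset.sum_add, Nat.left_eq_add, Multiset.sum_eq_zero_iff]
  intro x hx
  simpa using (Multiset.mem_filter.mp hx).2

lemma pos_of_mem_strip {μ : Multiset ℕ} {y : ℕ} (hy : y ∈ strip μ) : 0 < y :=
  (Multiset.mem_filter.mp hy).2

lemma transpose_eq_zero_iff {μ : Multiset ℕ} {j : ℕ} : transpose μ j = 0 ↔ part μ 0 ≤ j := by
  simp [transpose, Multiset.filter_eq_nil, part_zero_le_iff]

lemma transpose_cons (a : ℕ) (μ : Multiset ℕ) (j : ℕ) :
    transpose (a ::ₘ μ) j = (if j < a then 1 else 0) + transpose μ j := by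
  unfold transpose
  rw [Multiset.filter_cons, Multiset.card_add]
  split <;> simp

lemma transpose_strip (μ : Multiset ℕ) : transpose (strip μ) = transpose μ := by
  ext j
  unfold transpose strip
  rw [Multiset.filter_filter]
  congr 1
  exact Multiset.filter_congr fun x _ => ⟨And.left, fun h => ⟨h, by omega⟩⟩

lemma transpose_eq_ite_add_transpose_mtail (μ : Multiset ℕ) (j : ℕ) :
    transpose μ j = (if j < part μ 0 then 1 else 0) + transpose (mtail μ) j := by
  rcases eq_or_ne μ 0 with rfl | hμ
  · simp [part_zero_eq_zero, mtail]
  · conv_lhs => rw [← cons_mtail hμ]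
    exact transpose_cons _ _ _

lemma sum_range_transpose (μ : Multiset ℕ) {N : ℕ} (hN : ∀ y ∈ μ, y ≤ N) :
    ∑ j ∈ Finset.range N, transpose μ j = μ.sum := by
  induction μ using Multiset.induction_on with
  | empty => simp [transpose]
  | cons a μ ih =>
    have ha : (Finset.range N).filter (· < a) = Finset.range a := by
      ext j
      simp only [Finset.mem_filter, Finset.mem_range]
      have := hN a (Multiset.mem_cons_self a μ)
      omega
    simp only [transpose_cons, Finset.sum_add_distrib, Finset.sum_boole, Nat.cast_id, ha,
      Finset.card_range]
    rw [ih fun y hy => hN y (Multiset.mem_cons_of_mem hy), Multiset.sum_cons]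

lemma transpose_pred_eq_count_add (μ : Multiset ℕ) {k : ℕ} (hk : 0 < k) :
    transpose μ (k - 1) = μ.count k + transpose μ k := by
  induction μ using Multiset.induction_on with
  | empty => rfl
  | cons a μ ih =>
    rw [transpose_cons, transpose_cons, Multiset.count_cons, ih]
    split_ifs <;> omega

lemma eq_of_transpose_eq {μ μ' : Multiset ℕ} (hμ : ∀ y ∈ μ, 0 < y) (hμ' : ∀ y ∈ μ', 0 < y)
    (h : ∀ j, transpose μ j = transpose μ' j) : μ = μ' := by
  ext k
  rcases Nat.eq_zero_or_pos k with rfl | hk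
  · rw [Multiset.count_eq_zero_of_notMem fun h0 => (hμ 0 h0).false,
      Multiset.count_eq_zero_of_notMem fun h0 => (hμ' 0 h0).false]
  · have := transpose_pred_eq_count_add μ hk
    have := transpose_pred_eq_count_add μ' hk
    have := h (k - 1)
    have := h k
    omega

lemma sum_le_sum_of_transpose_le {μ μ' : Multiset ℕ} (h : ∀ j, transpose μ j ≤ transpose μ' j) :
    μ.sum ≤ μ'.sum := by
  set N := max (part μ 0) (part μ' 0)
  rw [← sum_range_transpose μ (N := N) fun y hy => (le_part_zero hy).trans (le_max_left _ _),
    ← sum_range_transpose μ' (N := N) fun y hy => (le_part_zero hy).trans (le_max_right _ _)]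
  exact Finset.sum_le_sum fun j _ => h j

lemma eq_of_transpose_le_of_sum_le {μ μ' : Multiset ℕ} (hμ : ∀ y ∈ μ, 0 < y)
    (hμ' : ∀ y ∈ μ', 0 < y) (h : ∀ j, transpose μ j ≤ transpose μ' j) (hs : μ'.sum ≤ μ.sum) :
    μ = μ' := by
  set N := max (part μ 0) (part μ' 0)
  have hsum : ∑ j ∈ Finset.range N, transpose μ j = ∑ j ∈ Finset.range N, transpose μ' j := by
    rw [sum_range_transpose μ fun y hy => (le_part_zero hy).trans (le_max_left _ _),
      sum_range_transpose μ' fun y hy => (le_part_zero hy).trans (le_max_right _ _)]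
    exact le_antisymm (sum_le_sum_of_transpose_le h) hs
  refine eq_of_transpose_eq hμ hμ' fun j => ?_
  by_cases hj : j < N
  · exact (Finset.sum_eq_sum_iff_of_le fun j _ => h j).mp hsum j (Finset.mem_range.mpr hj)
  · rw [transpose_eq_zero_iff.mpr (by omega), transpose_eq_zero_iff.mpr (by omega)]

lemma transpose_raiseLargestPart (ν : Multiset ℕ) (t j : ℕ) :
    transpose (raiseLargestPart ν t) j =
      (if j < part ν 0 + t then 1 else 0) + transpose (mtail ν) j := by
  rw [raiseLargestPart, transpose_strip, transpose_cons]

lemma sum_raiseLargestPart (ν : Multiset ℕ) (t : ℕ) :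
    (raiseLargestPart ν t).sum = ν.sum + t := by
  rw [raiseLargestPart, sum_strip, Multiset.sum_cons, sum_eq_part_zero_add_sum_mtail ν]
  omega

lemma le_of_mem_raiseLargestPart {ν : Multiset ℕ} {t y : ℕ} (hy : y ∈ raiseLargestPart ν t) :
    y ≤ part ν 0 + t := by
  rcases Multiset.mem_cons.mp (Multiset.mem_of_mem_filter hy) with rfl | hy
  · exact le_rfl
  · exact (le_part_zero (Multiset.mem_of_mem_erase hy)).trans (Nat.le_add_right _ _)

lemma preceq_transpose_raiseLargestPart (ν : Multiset ℕ) (t : ℕ) :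
    Preceq (transpose ν) (transpose (raiseLargestPart ν t)) := by
  intro j
  rw [transpose_raiseLargestPart, transpose_eq_ite_add_transpose_mtail ν j]
  constructor <;> split_ifs <;> omega

lemma preceq_refl (f : ℕ → ℕ) : Preceq f f := fun _ => ⟨Nat.le_succ _, le_rfl⟩

lemma PartLexLt.irrefl (μ : Multiset ℕ) : ¬ PartLexLt μ μ := fun ⟨_, _, h⟩ => lt_irrefl _ h

/-- `raiseLargestPart ν t` exceeds `x` by a horizontal strip of `t` boxes; each of the columns
`part x 0 ≤ j < part ν 0 + t` holds one box of it, the others lie in columns `j < part x 0`. -/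
lemma sum_deficit_add_part_zero_le {ν x : Multiset ℕ} {t : ℕ} (hsum : x.sum = ν.sum)
    (H : Preceq (transpose x) (transpose (raiseLargestPart ν t))) :
    ∑ j ∈ Finset.range (part x 0), (transpose (raiseLargestPart ν t) j - transpose x j)
      + part ν 0 ≤ part x 0 := by
  set A := raiseLargestPart ν t
  set D := fun j => transpose A j - transpose x j
  set M := max (part x 0) (part ν 0 + t)
  have hle : ∀ j, transpose x j ≤ transpose A j := fun j => (H j).2
  have htotal : ∑ j ∈ Finset.range M, D j = t := by
    rw [Finset.sum_tsub_distrib _ fun j _ => hle j,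
      sum_range_transpose A fun y hy => (le_of_mem_raiseLargestPart hy).trans (le_max_right _ _),
      sum_range_transpose x fun y hy => (le_part_zero hy).trans (le_max_left _ _),
      sum_raiseLargestPart, hsum, Nat.add_sub_cancel_left]
  have hgap : ∀ j ∈ Finset.Ico (part x 0) M, 1 ≤ D j := by
    intro j hj
    obtain ⟨hxj, hjM⟩ := Finset.mem_Ico.mp hj
    have hj : j < part ν 0 + t := by omega
    simp only [D, A, transpose_raiseLargestPart, if_pos hj, transpose_eq_zero_iff.mpr hxj]
    omega
  have hsplit : ∑ j ∈ Finset.range (part x 0), D j + (part ν 0 + t - part x 0) ≤ t := by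
    calc ∑ j ∈ Finset.range (part x 0), D j + (part ν 0 + t - part x 0)
        = ∑ j ∈ Finset.range (part x 0), D j + ∑ _j ∈ Finset.Ico (part x 0) M, 1 := by
          rw [Finset.sum_const, Nat.card_Ico, smul_eq_mul, mul_one]
          omega
      _ ≤ ∑ j ∈ Finset.range (part x 0), D j + ∑ j ∈ Finset.Ico (part x 0) M, D j := by
          gcongr with j hj
          exact hgap j hj
      _ = t := by rw [Finset.sum_range_add_sum_Ico _ (le_max_left _ _), htotal]
  change ∑ j ∈ Finset.range (part x 0), D j + part ν 0 ≤ part x 0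
  omega

lemma not_partLexLt_of_preceq_raiseLargestPart {ν x : Multiset ℕ} {t : ℕ}
    (hx : ∀ y ∈ x, 0 < y) (hν : ∀ y ∈ ν, 0 < y) (hsum : x.sum = ν.sum)
    (H : Preceq (transpose x) (transpose (raiseLargestPart ν t))) :
    ¬ PartLexLt x ν := by
  have hbound := sum_deficit_add_part_zero_le hsum H
  rintro ⟨i, hpre, hlt⟩
  rcases Nat.eq_zero_or_pos i with rfl | hi
  · omega
  have h0 : part x 0 = part ν 0 := hpre 0 hi
  have hzero : ∑ j ∈ Finset.range (part x 0),
      (transpose (raiseLargestPart ν t) j - transpose x j) = 0 := by omega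
  have hdeficit : ∀ j < part ν 0, transpose (raiseLargestPart ν t) j = transpose x j := by
    intro j hj
    have := Finset.sum_eq_zero_iff.mp hzero j (Finset.mem_range.mpr (h0 ▸ hj))
    have := (H j).2
    omega
  have hxν : x = ν := by
    refine eq_of_transpose_eq hx hν fun j => ?_
    by_cases hj : j < part ν 0
    · rw [← hdeficit j hj, transpose_raiseLargestPart, transpose_eq_ite_add_transpose_mtail ν j,
        if_pos hj, if_pos (by omega)]
    · rw [transpose_eq_zero_iff.mpr (by omega), transpose_eq_zero_iff.mpr (by omega)]
  subst hxν
  exact lt_irrefl _ hlt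

lemma not_lt_of_preceq_raiseLargestPart {μ ν μ'' ν'' : Multiset ℕ} {t : ℕ}
    (h0μ : ∀ y ∈ μ, 0 < y) (h0ν : ∀ y ∈ ν, 0 < y) (h0μ'' : ∀ y ∈ μ'', 0 < y)
    (h0ν'' : ∀ y ∈ ν'', 0 < y) (hs : μ''.sum + ν''.sum = μ.sum + ν.sum)
    (hν : Preceq (transpose ν'') (transpose (raiseLargestPart ν t)))
    (hμ : Preceq (transpose μ) (transpose μ'')) :
    ¬ (μ''.sum < μ.sum ∨ (μ''.sum = μ.sum ∧ PartLexLt μ'' μ) ∨ (μ'' = μ ∧ PartLexLt ν'' ν)) := by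
  have hle : μ.sum ≤ μ''.sum := sum_le_sum_of_transpose_le fun j => (hμ j).2
  rintro (hlt | ⟨heq, hlex⟩ | ⟨rfl, hlex⟩)
  · omega
  · rw [eq_of_transpose_le_of_sum_le h0μ h0μ'' (fun j => (hμ j).2) heq.le] at hlex
    exact PartLexLt.irrefl _ hlex
  · exact not_partLexLt_of_preceq_raiseLargestPart h0ν'' h0ν (by omega) hν hlex

lemma halfTri_add_halfTri_of_natAbs_eq_succ {a b : ℤ} (h : b.natAbs = a.natAbs + 1) :
    halfTri a + halfTri b = 2 * halfTri a + b.natAbs := by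
  unfold halfTri
  rw [h, show (a.natAbs + 1) * (a.natAbs + 1 + 1) = a.natAbs * (a.natAbs + 1) + (a.natAbs + 1) * 2
    by ring, Nat.add_mul_div_right _ _ two_pos]
  omega

lemma even_halfTri_add_halfTri_deltaPrime {n n' : ℕ} {δ : ℤ} (hδ : IsAdmissible δ) :
    Even (halfTri δ + halfTri (deltaPrime n n' δ) + (n + n')) := by
  unfold deltaPrime
  rw [Nat.even_iff]
  split_ifs with hE h0
  · simpa [h0, halfTri] using Nat.even_iff.mp hE
  · have hE := Nat.even_iff.mp hE
    rcases hδ with ⟨⟨k, rfl⟩, hk⟩ | ⟨⟨k, rfl⟩, hk⟩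
    · rw [add_comm (halfTri _), halfTri_add_halfTri_of_natAbs_eq_succ (by omega)]
      omega
    · rw [halfTri_add_halfTri_of_natAbs_eq_succ (by omega)]
      omega
  · have hE := Nat.not_even_iff.mp hE
    rcases hδ with ⟨⟨k, rfl⟩, hk⟩ | ⟨⟨k, rfl⟩, hk⟩
    · rw [halfTri_add_halfTri_of_natAbs_eq_succ (by omega)]
      omega
    · rw [add_comm (halfTri _), halfTri_add_halfTri_of_natAbs_eq_succ (by omega)]
      omega

lemma two_mul_tauNat {n n' : ℕ} {δ : ℤ} (hδ : IsAdmissible δ) (hτ : 0 ≤ tau n n' δ) :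
    2 * tauNat n n' δ + n + halfTri (deltaPrime n n' δ) = n' + halfTri δ := by
  have hle : n + halfTri (deltaPrime n n' δ) ≤ n' + halfTri δ := by
    unfold tau at hτ
    exact_mod_cast (by linarith : (n : ℚ) + halfTri (deltaPrime n n' δ) ≤ n' + halfTri δ)
  have hpar := Nat.even_iff.mp (even_halfTri_add_halfTri_deltaPrime (n := n) (n' := n') hδ)
  unfold tauNat
  omega

lemma mem_bipSet_deltaPrime {n n' : ℕ} {δ : ℤ} (hδ : IsAdmissible δ) (hτ : 0 ≤ tau n n' δ)
    {p q : Multiset ℕ × Multiset ℕ} (hp : p ∈ BipSet n δ) (hq₁ : ∀ y ∈ q.1, 0 < y)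
    (hq₂ : ∀ y ∈ q.2, 0 < y) (hsum : q.1.sum + q.2.sum = p.1.sum + p.2.sum + tauNat n n' δ) :
    q ∈ BipSet n' (deltaPrime n n' δ) := by
  refine ⟨hq₁, hq₂, ?_⟩
  have := two_mul_tauNat hδ hτ
  have := hp.2.2
  omega

lemma inFlat_of_forall_not_precCond {n n' : ℕ} {δ : ℤ}
    {bar : Multiset ℕ × Multiset ℕ → Option (Multiset ℕ × Multiset ℕ)}
    (hbar : IsThetaBar n n' δ bar) {p q : Multiset ℕ × Multiset ℕ} (hq : ThetaB n n' δ p q)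
    (h : ∀ r ∈ BipSet n δ, BLt n n' r p → ¬ PrecCond n n' r q) :
    InFlat n n' δ bar p q :=
  ⟨hq, fun r hr hlt hbar_r => h r hr hlt ((hbar.2 r hr).2 q hbar_r).1.1.2⟩

section Witness

variable {n n' : ℕ} {δ : ℤ} {bar : Multiset ℕ × Multiset ℕ → Option (Multiset ℕ × Multiset ℕ)}
  {p : Multiset ℕ × Multiset ℕ}

lemma inFlat_raiseLargestPart_of_even (hE : Even (n + n')) (hδ : IsAdmissible δ)
    (hτ : 0 ≤ tau n n' δ) (hbar : IsThetaBar n n' δ bar) (hp : p ∈ BipSet n δ) :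
    InFlat n n' δ bar p (raiseLargestPart p.2 (tauNat n n' δ), p.1) := by
  have ⟨hp₁, hp₂, _⟩ := hp
  refine inFlat_of_forall_not_precCond hbar ⟨mem_bipSet_deltaPrime hδ hτ hp
    (fun _ => pos_of_mem_strip) hp₁ ?_, ?_⟩ ?_
  · simp only [sum_raiseLargestPart]
    omega
  · rw [PrecCond, if_pos hE]
    exact ⟨preceq_transpose_raiseLargestPart _ _, preceq_refl _⟩
  · rintro r ⟨hr₁, hr₂, hr⟩ hlt hpc
    rw [PrecCond, if_pos hE] at hpc
    rw [BLt, if_pos hE] at hlt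
    exact not_lt_of_preceq_raiseLargestPart hp₁ hp₂ hr₁ hr₂ (by omega) hpc.1 hpc.2 hlt

lemma inFlat_raiseLargestPart_of_odd (hE : ¬ Even (n + n')) (hδ : IsAdmissible δ)
    (hτ : 0 ≤ tau n n' δ) (hbar : IsThetaBar n n' δ bar) (hp : p ∈ BipSet n δ) :
    InFlat n n' δ bar p (p.2, raiseLargestPart p.1 (tauNat n n' δ)) := by
  have ⟨hp₁, hp₂, _⟩ := hp
  refine inFlat_of_forall_not_precCond hbar ⟨mem_bipSet_deltaPrime hδ hτ hp
    hp₂ (fun _ => pos_of_mem_strip) ?_, ?_⟩ ?_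
  · simp only [sum_raiseLargestPart]
    omega
  · rw [PrecCond, if_neg hE]
    exact ⟨preceq_transpose_raiseLargestPart _ _, preceq_refl _⟩
  · rintro r ⟨hr₁, hr₂, hr⟩ hlt hpc
    rw [PrecCond, if_neg hE] at hpc
    rw [BLt, if_neg hE] at hlt
    exact not_lt_of_preceq_raiseLargestPart hp₂ hp₁ hr₂ hr₁ (by omega) hpc.1 hpc.2 hlt

end Witness

/-- If `τ ≥ 0` then `Θ♭(Λ)` is nonempty for every `Λ ∈ S_{n,δ}`; consequently
`θ̄(Λ)` is defined for every `Λ ∈ S_{n,δ}`. -/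
theorem statement10 (n n' : ℕ) (δ : ℤ) (hδ : IsAdmissible δ) (hτ : 0 ≤ tau n n' δ) :
    ∀ bar : Multiset ℕ × Multiset ℕ → Option (Multiset ℕ × Multiset ℕ),
      IsThetaBar n n' δ bar → ∀ p ∈ BipSet n δ,
        (∃ q, InFlat n n' δ bar p q) ∧ ∃ q, bar p = some q := by
  intro bar hbar p hp
  have hflat : ∃ q, InFlat n n' δ bar p q := by
    by_cases hE : Even (n + n')
    · exact ⟨_, inFlat_raiseLargestPart_of_even hE hδ hτ hbar hp⟩
    · exact ⟨_, inFlat_raiseLargestPart_of_odd hE hδ hτ hbar hp⟩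
  exact ⟨hflat, (hbar.2 p hp).1 hflat⟩

end PanUnitary
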